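/- Let m ∈ (−1,1) and μ := arctanh(−m). Let I be a finite nonempty index set and f : {−1,1}^{|I|} → ℝ. Then: (i) for every finite set Λ with N := |Λ| ≥ |I| such that m lies in the range of m_N and m ∉ {−1,1}, |∫ f∘P_I dμ_MC^{m;N} − ∫ f∘P_I dμ_C^{μ;N}| ≤ √(2|I|) · (max_{σ∈{−1,1}^{|I|}} |f(σ)|) · √(ln(N+1)/N); and (ii) there exists N(m) ∈ ℕ such that for all N ≥ N(m) with m in the range of m_N, H(μ_MC^{m;N} ‖ μ_C^{μ;N})/N ≥ ln(N+1)/(4N), so the logarithmic factor in (i) cannot be removed by this relative-entropy bound. -/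

import Mathlib

/-- The inverse hyperbolic tangent, `arctanh x = (1/2) ln((1+x)/(1−x))`. -/
noncomputable def artanh (x : ℝ) : ℝ := Real.log ((1 + x) / (1 - x)) / 2

/-- The magnetization `M[φ] = ∑_x φ(x)` of a spin configuration `φ ∈ {−1,1}^N`,
encoded as `φ : Fin N → Bool` with `true ↦ 1`, `false ↦ −1`. -/
noncomputable def mag {N : ℕ} (φ : Fin N → Bool) : ℝ :=
  ∑ x, if φ x then (1 : ℝ) else -1

-- The set `S_m` of configurations with magnetization density `m`.
open Classical in
noncomputable def magSet (N : ℕ) (m : ℝ) : Finset (Fin N → Bool) :=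
  Finset.univ.filter fun φ => mag φ / N = m

/-- Expectation of `f` in the auxiliary microcanonical ensemble `μ_MC^{m;N}`. -/
noncomputable def mcExp (N : ℕ) (m : ℝ) (f : (Fin N → Bool) → ℝ) : ℝ :=
  (∑ φ ∈ magSet N m, f φ) / ((magSet N m).card : ℝ)

/-- The auxiliary canonical partition function `Z_C(μ;N) = ∑_φ e^{−μ M[φ]}`. -/
noncomputable def Zcan (N : ℕ) (μ : ℝ) : ℝ :=
  ∑ φ : Fin N → Bool, Real.exp (-μ * mag φ)

/-- Expectation of `f` in the auxiliary canonical ensemble `μ_C^{μ;N}`. -/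
noncomputable def canExp (N : ℕ) (μ : ℝ) (f : (Fin N → Bool) → ℝ) : ℝ :=
  (∑ φ : Fin N → Bool, Real.exp (-μ * mag φ) * f φ) / Zcan N μ

/-- The relative entropy `H(μ_MC^{m;N} ‖ μ_C^{μ;N})`. -/
noncomputable def relEnt (N : ℕ) (m μ : ℝ) : ℝ :=
  ∑ φ ∈ magSet N m, ((magSet N m).card : ℝ)⁻¹ *
    Real.log (((magSet N m).card : ℝ)⁻¹ / (Real.exp (-μ * mag φ) / Zcan N μ))

/-- The projection `P_I : {−1,1}^N → {−1,1}^n`. -/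
noncomputable def projB {N n : ℕ} (I : Finset (Fin N)) (h : I.card = n)
    (φ : Fin N → Bool) (j : Fin n) : Bool :=
  φ ↑(I.orderIsoOfFin h j)

/-!
Let `k` be the number of `true` spins of a configuration with magnetization density `m`, so that
`p := k / N = (1 + m) / 2` is also the one-spin probability of `true` under the canonical ensemble
with `μ = artanh (-m)`. Under the microcanonical ensemble the spins in `I` follow the hypergeometric
law of `n` draws from `N` spins of which `k` are `true`; under the canonical one they are i.i.d.
Bernoulli(`p`). By Pinsker's inequality the difference of the expectations of `f` is at most
`max |f| * √(2 Dₙ)`, where `Dₙ` is the relative entropy of these two laws.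

Revealing the spins one at a time, the chain rule writes `Dₙ` as the sum of the increments
`binEntropy p - E[binEntropy rᵢ]`, where `rᵢ` is the conditional probability that the next spin is
`true`. Since `(rᵢ)` is a martingale and `binEntropy` is concave, the increments increase, hence
`Dₙ / n ≤ D_N / N`. Finally `D_N = -log (N.choose k * p ^ k * (1 - p) ^ (N - k))` and `k` is the
mode of the binomial law, so this binomial probability is at least `1 / (N + 1)`.

For (ii), `D_N` is the relative entropy of the two ensembles themselves, and Stirling's formula
bounds the binomial probability by `O(1 / √N)`, so `D_N ≥ log N / 2 - O(1)`.
-/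

open Finset InformationTheory
open Real hiding artanh

section Pinsker

lemma log_add_inv_sub_one_nonneg {t : ℝ} (ht : 0 < t) : 0 ≤ log t + t⁻¹ - 1 := by
  have h := log_le_sub_one_of_pos (inv_pos.mpr ht)
  rw [log_inv] at h
  linarith

lemma monotoneOn_add_one_mul_log_sub_two_mul :
    MonotoneOn (fun t ↦ (t + 1) * log t - 2 * (t - 1)) (Set.Ioi 0) := by
  have hderiv : ∀ t ∈ Set.Ioi (0 : ℝ),
      HasDerivAt (fun t ↦ (t + 1) * log t - 2 * (t - 1)) (log t + t⁻¹ - 1) t := by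
    intro t (ht : 0 < t)
    refine ((((hasDerivAt_id' t).add_const 1).mul (hasDerivAt_log ht.ne')).sub
      (((hasDerivAt_id' t).sub_const 1).const_mul 2)).congr_deriv ?_
    field_simp
    ring
  refine monotoneOn_of_deriv_nonneg (convex_Ioi 0)
    (fun t ht ↦ (hderiv t ht).continuousAt.continuousWithinAt)
    (fun t ht ↦ (hderiv t (interior_subset ht)).differentiableAt.differentiableWithinAt)
    (fun t ht ↦ ?_)
  rw [(hderiv t (interior_subset ht)).deriv]
  exact log_add_inv_sub_one_nonneg (interior_subset ht : t ∈ Set.Ioi 0)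

/-- The derivative of `(2t + 4) klFun t - 3 (t - 1)²` is `4 ((t + 1) log t - 2 (t - 1))`, which
has the sign of `t - 1`, so the function is minimal (and zero) at `t = 1`. -/
lemma three_mul_sub_one_sq_le_klFun {t : ℝ} (ht : 0 < t) :
    3 * (t - 1) ^ 2 ≤ (2 * t + 4) * klFun t := by
  set u : ℝ → ℝ := fun t ↦ (2 * t + 4) * klFun t - 3 * (t - 1) ^ 2
  set v : ℝ → ℝ := fun t ↦ (t + 1) * log t - 2 * (t - 1)
  have hderiv : ∀ t ∈ Set.Ioi (0 : ℝ), HasDerivAt u (4 * v t) t := by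
    intro t (ht : 0 < t)
    refine ((((hasDerivAt_id' t).const_mul 2).add_const 4).mul (hasDerivAt_klFun ht.ne') |>.sub
      ((((hasDerivAt_id' t).sub_const 1).pow 2).const_mul 3)).congr_deriv ?_
    simp only [v, klFun_apply]
    push_cast
    ring
  have hv1 : v 1 = 0 := by simp [v]
  have hcont : ∀ s ⊆ Set.Ioi (0 : ℝ), ContinuousOn u s := fun s hs t ht ↦
    (hderiv t (hs ht)).continuousAt.continuousWithinAt
  have hu1 : u 1 = 0 := by simp [u, klFun_one]
  suffices 0 ≤ u t by simp only [u] at this; linarith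
  rcases le_total 1 t with h1 | h1
  · have hmono : MonotoneOn u (Set.Ici 1) := by
      refine monotoneOn_of_deriv_nonneg (convex_Ici 1)
        (hcont _ fun s (hs : 1 ≤ s) ↦ one_pos.trans_le hs) (fun s hs ↦ ?_) (fun s hs ↦ ?_) <;>
        rw [interior_Ici] at hs <;> have hs0 : (0 : ℝ) < s := one_pos.trans hs
      · exact (hderiv s hs0).differentiableAt.differentiableWithinAt
      · rw [(hderiv s hs0).deriv, ← hv1]
        have := monotoneOn_add_one_mul_log_sub_two_mul (Set.mem_Ioi.mpr one_pos) hs0 hs.le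
        simp only [v] at this ⊢
        linarith
    exact hu1 ▸ hmono Set.self_mem_Ici h1 h1
  · have hanti : AntitoneOn u (Set.Ioc 0 1) := by
      refine antitoneOn_of_deriv_nonpos (convex_Ioc 0 1)
        (hcont _ fun s hs ↦ hs.1) (fun s hs ↦ ?_) (fun s hs ↦ ?_) <;> rw [interior_Ioc] at hs
      · exact (hderiv s hs.1).differentiableAt.differentiableWithinAt
      · rw [(hderiv s hs.1).deriv, ← hv1]
        have := monotoneOn_add_one_mul_log_sub_two_mul hs.1 (Set.mem_Ioi.mpr one_pos) hs.2.le
        simp only [v] at this ⊢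
        linarith
    exact hu1 ▸ hanti ⟨ht, h1⟩ ⟨one_pos, le_rfl⟩ h1

lemma three_mul_sub_sq_le {a b : ℝ} (ha : 0 ≤ a) (hb : 0 < b) :
    3 * (a - b) ^ 2 ≤ (2 * a + 4 * b) * (a * log (a / b) - a + b) := by
  rcases ha.eq_or_lt with rfl | ha
  · simp only [zero_div, log_zero, mul_zero, zero_sub, zero_add, mul_zero]
    nlinarith
  obtain ⟨t, ht, rfl⟩ : ∃ t, 0 < t ∧ a = b * t := ⟨a / b, div_pos ha hb, by field_simp⟩
  have h := mul_le_mul_of_nonneg_left (three_mul_sub_one_sq_le_klFun ht) (sq_nonneg b)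
  rw [klFun_apply] at h
  rw [mul_div_cancel_left₀ _ hb.ne']
  linear_combination h

/-- Cauchy–Schwarz with the weights `2 a x + 4 b x`, which sum to `6`, reduces this to
`three_mul_sub_sq_le`. -/
theorem pinsker {X : Type*} [Fintype X] {a b : X → ℝ} (ha : ∀ x, 0 ≤ a x) (hb : ∀ x, 0 < b x)
    (hsa : ∑ x, a x = 1) (hsb : ∑ x, b x = 1) :
    (∑ x, |a x - b x|) ^ 2 ≤ 2 * ∑ x, a x * log (a x / b x) := by
  have hw : ∀ x ∈ univ, 0 < 2 * a x + 4 * b x := fun x _ ↦ by linarith [ha x, hb x]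
  have hsedrakyan := sq_sum_div_le_sum_sq_div univ (fun x ↦ |a x - b x|) hw
  have hsw : ∑ x, (2 * a x + 4 * b x) = 6 := by
    rw [sum_add_distrib, ← mul_sum, ← mul_sum, hsa, hsb]; norm_num
  have hterm : ∀ x ∈ univ, |a x - b x| ^ 2 / (2 * a x + 4 * b x)
      ≤ (a x * log (a x / b x) - a x + b x) / 3 := fun x hx ↦ by
    rw [sq_abs, div_le_div_iff₀ (hw x hx) three_pos]
    linarith [three_mul_sub_sq_le (ha x) (hb x)]
  have hsum : ∑ x, (a x * log (a x / b x) - a x + b x) / 3 = (∑ x, a x * log (a x / b x)) / 3 := by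
    rw [← sum_div, sum_add_distrib, sum_sub_distrib, hsa, hsb]; ring
  rw [hsw] at hsedrakyan
  linarith [(hsedrakyan.trans (sum_le_sum hterm)).trans hsum.le]

end Pinsker

section Configurations

variable {α : Type*} [Fintype α]

def numTrue (σ : α → Bool) : ℕ := ∑ x, if σ x then 1 else 0

lemma numTrue_cons {i : ℕ} (b : Bool) (σ : Fin i → Bool) :
    numTrue (Fin.cons b σ : Fin (i + 1) → Bool) = numTrue σ + if b then 1 else 0 := by
  rw [numTrue, Fin.sum_univ_succ, add_comm]
  simp [numTrue]

lemma card_filter_numTrue_eq [DecidableEq α] (t : ℕ) :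
    #{σ : α → Bool | numTrue σ = t} = (Fintype.card α).choose t := by
  rw [← card_univ, ← card_powersetCard]
  refine card_bij (fun σ _ ↦ univ.filter (σ · = true)) (fun σ hσ ↦ ?_) (fun σ _ τ _ hστ ↦ ?_)
    fun s hs ↦ ?_
  · rw [mem_powersetCard, card_filter]
    exact ⟨subset_univ _, (mem_filter.mp hσ).2⟩
  · funext x
    simpa using congrArg (x ∈ ·) hστ
  · refine ⟨fun x ↦ decide (x ∈ s), ?_, by ext; simp⟩
    rw [mem_filter, numTrue, ← (mem_powersetCard.mp hs).2, card_eq_sum_ones, ← sum_filter]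
    simp

def bernoulliWeight (p : ℝ) (b : Bool) : ℝ := if b then p else 1 - p

def bernoulliProd (p : ℝ) (σ : α → Bool) : ℝ := ∏ x, bernoulliWeight p (σ x)

lemma bernoulliWeight_pos {p : ℝ} (hp : p ∈ Set.Ioo 0 1) (b : Bool) : 0 < bernoulliWeight p b := by
  cases b <;> simp [bernoulliWeight, hp.1, hp.2]

lemma bernoulliProd_pos {p : ℝ} (hp : p ∈ Set.Ioo 0 1) (σ : α → Bool) : 0 < bernoulliProd p σ :=
  prod_pos fun x _ ↦ bernoulliWeight_pos hp (σ x)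

lemma sum_bernoulliProd [DecidableEq α] (p : ℝ) : ∑ σ : α → Bool, bernoulliProd p σ = 1 := by
  simp_rw [bernoulliProd, ← Fintype.prod_sum, Fintype.sum_bool, bernoulliWeight]
  simp

lemma bernoulliProd_cons {i : ℕ} (p : ℝ) (b : Bool) (σ : Fin i → Bool) :
    bernoulliProd p (Fin.cons b σ : Fin (i + 1) → Bool)
      = bernoulliProd p σ * bernoulliWeight p b := by
  rw [bernoulliProd, Fin.prod_univ_succ, mul_comm]
  simp [bernoulliProd]

lemma bernoulliProd_eq_pow (p : ℝ) (σ : α → Bool) :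
    bernoulliProd p σ = p ^ numTrue σ * (1 - p) ^ (Fintype.card α - numTrue σ) := by
  classical
  have hcard : #{x | σ x = true} + #{x | ¬σ x = true} = Fintype.card α :=
    card_filter_add_card_filter_not _
  rw [bernoulliProd, numTrue, ← card_filter, ← hcard, Nat.add_sub_cancel_left, ← prod_const,
    ← prod_const]
  simp only [bernoulliWeight]
  rw [prod_ite]

lemma prod_ite_eq_mul_bernoulliProd {a b : ℝ} (hab : a + b ≠ 0) (σ : α → Bool) :
    ∏ x, (if σ x then a else b) = (a + b) ^ Fintype.card α * bernoulliProd (a / (a + b)) σ := by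
  rw [bernoulliProd, ← card_univ, ← prod_const, ← prod_mul_distrib]
  refine prod_congr rfl fun x _ ↦ ?_
  cases σ x
  · simp only [bernoulliWeight, Bool.false_eq_true, ↓reduceIte]
    field_simp
    ring
  · simp only [bernoulliWeight, ↓reduceIte]
    field_simp

end Configurations

section Projection

variable {N n : ℕ} (I : Finset (Fin N)) (h : I.card = n)

def projEquiv : (Fin N → Bool) ≃ (Fin n → Bool) × ({x // x ∉ I} → Bool) :=
  (Equiv.piEquivPiSubtypeProd (· ∈ I) fun _ ↦ Bool).trans
    (Equiv.prodCongr ((I.orderIsoOfFin h).symm.toEquiv.arrowCongr (Equiv.refl Bool))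
      (Equiv.refl _))

lemma sum_projB {M : Type*} [AddCommMonoid M]
    (F : (Fin n → Bool) → ({x // x ∉ I} → Bool) → M) :
    ∑ φ, F (projB I h φ) (fun x ↦ φ x) = ∑ σ, ∑ v, F σ v := by
  rw [← Fintype.sum_prod_type']
  exact Fintype.sum_equiv (projEquiv I h) _ _ fun φ ↦ rfl

@[to_additive]
lemma prod_comp_eq_prod_projB_mul {M : Type*} [CommMonoid M] (g : Bool → M) (φ : Fin N → Bool) :
    ∏ x, g (φ x) = (∏ j, g (projB I h φ j)) * ∏ x : {x // x ∉ I}, g (φ x) := by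
  rw [← Fintype.prod_subtype_mul_prod_subtype (· ∈ I)]
  congr 1
  convert (Fintype.prod_equiv (I.orderIsoOfFin h).toEquiv (fun j ↦ g (projB I h φ j))
    (fun x : {x // x ∈ I} ↦ g (φ x)) fun j ↦ rfl).symm

lemma card_not_mem_eq : Fintype.card {x // x ∉ I} = N - I.card := by
  rw [Fintype.card_subtype_compl, Fintype.card_coe, Fintype.card_fin]

lemma numTrue_eq_numTrue_projB_add (φ : Fin N → Bool) :
    numTrue φ = numTrue (projB I h φ) + numTrue fun x : {x // x ∉ I} ↦ φ x :=
  sum_comp_eq_sum_projB_add I h (fun b ↦ if b then 1 else 0) φ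

lemma bernoulliProd_eq_bernoulliProd_projB_mul (p : ℝ) (φ : Fin N → Bool) :
    bernoulliProd p φ
      = bernoulliProd p (projB I h φ) * bernoulliProd p fun x : {x // x ∉ I} ↦ φ x :=
  prod_comp_eq_prod_projB_mul I h (bernoulliWeight p) φ

lemma sum_bernoulliProd_mul_projB (p : ℝ) (g : (Fin n → Bool) → ℝ) :
    ∑ φ, bernoulliProd p φ * g (projB I h φ) = ∑ σ, bernoulliProd p σ * g σ := by
  simp_rw [bernoulliProd_eq_bernoulliProd_projB_mul I h p]
  rw [sum_projB I h fun σ v ↦ bernoulliProd p σ * bernoulliProd p v * g σ]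
  refine sum_congr rfl fun σ _ ↦ ?_
  rw [← sum_mul, ← mul_sum, sum_bernoulliProd, mul_one]

lemma sum_numTrue_eq_comp_projB (k : ℕ) (g : (Fin n → Bool) → ℝ) :
    ∑ φ with numTrue φ = k, g (projB I h φ)
      = ∑ σ, (if numTrue σ ≤ k then ((N - n).choose (k - numTrue σ) : ℝ) else 0) * g σ := by
  classical
  simp_rw [sum_filter, numTrue_eq_numTrue_projB_add I h]
  rw [sum_projB I h fun σ v ↦ if numTrue σ + numTrue v = k then g σ else 0]
  refine sum_congr rfl fun σ _ ↦ ?_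
  have hcard : N - n = Fintype.card {x // x ∉ I} := by rw [card_not_mem_eq, h]
  rw [← sum_filter, sum_const, nsmul_eq_mul, hcard, ← card_filter_numTrue_eq]
  split_ifs with hσ
  · congr 3
    ext v
    simp only [mem_filter, mem_univ, true_and]
    omega
  · rw [filter_false_of_mem fun v _ ↦ by omega]
    simp

end Projection

lemma sum_fin_succ_bool {M : Type*} [AddCommMonoid M] {i : ℕ} (g : (Fin (i + 1) → Bool) → M) :
    ∑ τ, g τ = ∑ σ : Fin i → Bool, ∑ b, g (Fin.cons b σ) := by
  rw [← (Fin.consEquiv fun _ ↦ Bool).sum_comp, Fintype.sum_prod_type_right]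
  rfl

section Hypergeometric

variable {N k i : ℕ}

/-- The law of `i` of the spins of a uniformly random configuration of `N` spins, `k` of which are
`true`: the number of completions of `σ` is `(N - i).choose (k - numTrue σ)`. -/
noncomputable def hypergeomMarginal (N k : ℕ) {i : ℕ} (σ : Fin i → Bool) : ℝ :=
  if numTrue σ ≤ k then ((N - i).choose (k - numTrue σ) : ℝ) / N.choose k else 0

/-- The conditional probability under `hypergeomMarginal N k` that one more spin is `true`. -/
noncomputable def hypergeomNextProb (N k : ℕ) {i : ℕ} (σ : Fin i → Bool) : ℝ :=
  ((k : ℝ) - numTrue σ) / ((N : ℝ) - i)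

lemma hypergeomMarginal_nonneg (σ : Fin i → Bool) : 0 ≤ hypergeomMarginal N k σ := by
  unfold hypergeomMarginal
  split <;> positivity

lemma hypergeomMarginal_fin_zero (hkN : k ≤ N) (σ : Fin 0 → Bool) :
    hypergeomMarginal N k σ = 1 := by
  have hσ : numTrue σ = 0 := by simp [numTrue]
  have hC : (N.choose k : ℝ) ≠ 0 := by exact_mod_cast (Nat.choose_pos hkN).ne'
  simp [hypergeomMarginal, hσ, hC]

lemma hypergeomMarginal_cons (hkN : k ≤ N) (hi : i < N) (b : Bool) (σ : Fin i → Bool) :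
    hypergeomMarginal N k (Fin.cons b σ : Fin (i + 1) → Bool)
      = hypergeomMarginal N k σ * bernoulliWeight (hypergeomNextProb N k σ) b := by
  obtain ⟨M, hM⟩ : ∃ M, N - i = M + 1 := ⟨N - i - 1, by omega⟩
  have hMR : (N : ℝ) - i = M + 1 := by rw [← Nat.cast_sub hi.le, hM]; push_cast; ring
  have hM' : N - (i + 1) = M := by omega
  have hC : (N.choose k : ℝ) ≠ 0 := by exact_mod_cast (Nat.choose_pos hkN).ne'
  simp only [hypergeomMarginal, hypergeomNextProb, bernoulliWeight, numTrue_cons, hMR, hM', hM]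
  set j := numTrue σ
  cases b
  · simp only [Bool.false_eq_true, ↓reduceIte, add_zero]
    split_ifs with hj
    · rcases le_or_gt (k - j) (M + 1) with hkj | hkj
      · have key : (M.choose (k - j) : ℝ) * (M + 1)
            = (M + 1).choose (k - j) * (M + 1 - (k - j)) := by
          exact_mod_cast Nat.choose_mul_succ_eq M (k - j)
        field_simp
        linear_combination key
      · simp [Nat.choose_eq_zero_of_lt hkj, Nat.choose_eq_zero_of_lt (by omega : M < k - j)]
    · simp
  · simp only [↓reduceIte]
    split_ifs with hj1 hj
    · have key := Nat.add_one_mul_choose_eq M (k - (j + 1))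
      rw [show k - (j + 1) + 1 = k - j by omega] at key
      have keyR : ((M : ℝ) + 1) * M.choose (k - (j + 1))
          = (M + 1).choose (k - j) * ((k : ℝ) - j) := by
        rw [← Nat.cast_sub hj]
        exact_mod_cast key
      field_simp
      linear_combination keyR
    · omega
    · have hjk : j = k := by omega
      simp [hjk]
    · simp

lemma sum_hypergeomMarginal_mul_succ (hkN : k ≤ N) (hi : i < N)
    (g : (Fin (i + 1) → Bool) → ℝ) :
    ∑ τ, hypergeomMarginal N k τ * g τ = ∑ σ, hypergeomMarginal N k σ *
      ∑ b, bernoulliWeight (hypergeomNextProb N k σ) b * g (Fin.cons b σ) := by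
  rw [sum_fin_succ_bool]
  simp_rw [hypergeomMarginal_cons hkN hi, mul_sum, mul_assoc]

lemma sum_hypergeomMarginal (hkN : k ≤ N) (hi : i ≤ N) :
    ∑ σ : Fin i → Bool, hypergeomMarginal N k σ = 1 := by
  induction i with
  | zero => simp [hypergeomMarginal_fin_zero hkN]
  | succ i ih =>
    have h := sum_hypergeomMarginal_mul_succ hkN (by omega : i < N) fun _ ↦ (1 : ℝ)
    simp only [mul_one] at h
    simp [h, bernoulliWeight, ih (by omega)]

/-- The conditional probabilities `hypergeomNextProb` form a martingale. -/
lemma sum_bernoulliWeight_mul_hypergeomNextProb_cons (hi : i + 1 < N) (σ : Fin i → Bool) :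
    ∑ b, bernoulliWeight (hypergeomNextProb N k σ) b * hypergeomNextProb N k (Fin.cons b σ)
      = hypergeomNextProb N k σ := by
  have hiR : (i : ℝ) + 1 < N := by exact_mod_cast hi
  have hNi : (N : ℝ) - (i + 1) ≠ 0 := by linarith
  have hNi' : (N : ℝ) - i ≠ 0 := by linarith
  simp only [Fintype.sum_bool, bernoulliWeight, hypergeomNextProb, numTrue_cons, ↓reduceIte,
    Bool.false_eq_true]
  push_cast
  field_simp
  ring

lemma sum_hypergeomMarginal_mul_nextProb (hkN : k ≤ N) (hi : i < N) :
    ∑ σ : Fin i → Bool, hypergeomMarginal N k σ * hypergeomNextProb N k σ = k / N := by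
  induction i with
  | zero => simp [hypergeomMarginal_fin_zero hkN, hypergeomNextProb, numTrue]
  | succ i ih =>
    rw [sum_hypergeomMarginal_mul_succ hkN (by omega), ← ih (by omega)]
    simp_rw [sum_bernoulliWeight_mul_hypergeomNextProb_cons hi]

lemma hypergeomNextProb_mem_Icc (hi : i < N) {σ : Fin i → Bool}
    (hσ : hypergeomMarginal N k σ ≠ 0) : hypergeomNextProb N k σ ∈ Set.Icc 0 1 := by
  unfold hypergeomMarginal at hσ
  split_ifs at hσ with hj
  swap
  · exact (hσ rfl).elim
  have hkj : k - numTrue σ ≤ N - i := by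
    by_contra hlt
    simp [Nat.choose_eq_zero_of_lt (not_le.mp hlt)] at hσ
  have hNi : (0 : ℝ) < N - i := by
    have : (i : ℝ) < N := by exact_mod_cast hi
    linarith
  have hkjR : (k : ℝ) - numTrue σ ≤ N - i := by
    have : (k : ℝ) ≤ (N - i : ℕ) + numTrue σ := by exact_mod_cast (by omega : k ≤ N - i + numTrue σ)
    rw [Nat.cast_sub hi.le] at this
    linarith
  have hjR : (numTrue σ : ℝ) ≤ k := by exact_mod_cast hj
  exact ⟨div_nonneg (by linarith) hNi.le, (div_le_one hNi).mpr hkjR⟩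

lemma hypergeomNextProb_cons_mem_Icc (hi : i + 1 < N) {σ : Fin i → Bool}
    (hσ : hypergeomNextProb N k σ ∈ Set.Ioo 0 1) (b : Bool) :
    hypergeomNextProb N k (Fin.cons b σ) ∈ Set.Icc 0 1 := by
  have hNi : (0 : ℝ) < N - i := by
    have : (i : ℝ) + 1 < N := by exact_mod_cast hi
    linarith
  obtain ⟨h0, h1⟩ := hσ
  rw [hypergeomNextProb, div_pos_iff_of_pos_right hNi, sub_pos] at h0
  rw [hypergeomNextProb, div_lt_one hNi] at h1
  have h0' : numTrue σ + 1 ≤ k := by exact_mod_cast h0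
  have h1' : k + i + 1 ≤ N + numTrue σ := by
    have : (k : ℝ) + i < N + numTrue σ := by linarith
    exact_mod_cast this
  have h0R : (numTrue σ : ℝ) + 1 ≤ k := by exact_mod_cast h0'
  have h1R : (k : ℝ) + i + 1 ≤ N + numTrue σ := by exact_mod_cast h1'
  have hNi1 : (0 : ℝ) < N - (i + 1) := by linarith
  cases b <;>
    simp only [hypergeomNextProb, numTrue_cons, Bool.false_eq_true, ↓reduceIte, Nat.cast_add,
      Nat.cast_one, add_zero, Set.mem_Icc, div_le_one hNi1] <;>
    exact ⟨div_nonneg (by linarith) hNi1.le, by linarith⟩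

end Hypergeometric

lemma mul_log_div_eq_sub {x y : ℝ} (hy : y ≠ 0) : x * log (x / y) = x * log x - x * log y := by
  rcases eq_or_ne x 0 with rfl | hx
  · simp
  rw [log_div hx hy]
  ring

lemma mul_log_mul_div_mul {a b x y : ℝ} (ha : a ≠ 0) (hb : b ≠ 0) (hy : y ≠ 0) :
    x * log (a * x / (b * y)) = x * log (a / b) + x * log (x / y) := by
  rcases eq_or_ne x 0 with rfl | hx
  · simp
  rw [mul_div_mul_comm, log_mul (div_ne_zero ha hb) (div_ne_zero hx hy)]
  ring

lemma sum_bernoulliWeight_mul_log_div {q : ℝ} (hq : q ∈ Set.Ioo 0 1) (r : ℝ) :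
    ∑ b, bernoulliWeight r b * log (bernoulliWeight r b / bernoulliWeight q b)
      = -binEntropy r - (r * log q + (1 - r) * log (1 - q)) := by
  simp only [Fintype.sum_bool, mul_log_div_eq_sub (bernoulliWeight_pos hq _).ne']
  simp only [bernoulliWeight, ↓reduceIte, Bool.false_eq_true, binEntropy, log_inv]
  ring

/-- Jensen's inequality for `binEntropy`, allowing arbitrary `x`, `y` when the weight `t` is
degenerate. -/
lemma mul_binEntropy_add_mul_binEntropy_le {t x y : ℝ} (ht : t ∈ Set.Icc 0 1)
    (hxy : t ∈ Set.Ioo 0 1 → x ∈ Set.Icc 0 1 ∧ y ∈ Set.Icc 0 1) (hmix : t * x + (1 - t) * y = t) :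
    t * binEntropy x + (1 - t) * binEntropy y ≤ binEntropy t := by
  rcases ht.1.eq_or_lt with rfl | ht0
  · simp_all
  rcases ht.2.eq_or_lt with rfl | ht1
  · simp_all
  obtain ⟨hx, hy⟩ := hxy ⟨ht0, ht1⟩
  simpa [hmix] using
    strictConcave_binEntropy.concaveOn.2 hx hy ht.1 (sub_nonneg.mpr ht.2) (add_sub_cancel t 1)

section MarginalKL

variable {N k : ℕ}

/-- `marginalKL N k i` is the relative entropy of the law of `i` spins under the microcanonical
ensemble with respect to the canonical one. -/
noncomputable def marginalKL (N k i : ℕ) : ℝ :=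
  ∑ σ : Fin i → Bool,
    hypergeomMarginal N k σ * log (hypergeomMarginal N k σ / bernoulliProd ((k : ℝ) / N) σ)

noncomputable def nextSpinEntropy (N k i : ℕ) : ℝ :=
  ∑ σ : Fin i → Bool, hypergeomMarginal N k σ * binEntropy (hypergeomNextProb N k σ)

lemma natCast_div_mem_Ioo (hk : 0 < k) (hkN : k < N) : (k : ℝ) / N ∈ Set.Ioo 0 1 := by
  have hN : (0 : ℝ) < N := by exact_mod_cast hk.trans hkN
  exact ⟨by positivity, (div_lt_one hN).mpr (by exact_mod_cast hkN)⟩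

lemma marginalKL_zero (hkN : k ≤ N) : marginalKL N k 0 = 0 := by
  simp [marginalKL, hypergeomMarginal_fin_zero hkN, bernoulliProd]

/-- Chain rule: the increment is the expected relative entropy of the law of the next spin. -/
lemma marginalKL_succ (hk : 0 < k) (hkN : k < N) {i : ℕ} (hi : i < N) :
    marginalKL N k (i + 1)
      = marginalKL N k i + binEntropy ((k : ℝ) / N) - nextSpinEntropy N k i := by
  simp only [marginalKL, nextSpinEntropy]
  set p : ℝ := k / N
  have hp : p ∈ Set.Ioo 0 1 := natCast_div_mem_Ioo hk hkN
  have hterm : ∀ σ : Fin i → Bool,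
      hypergeomMarginal N k σ * ∑ b, bernoulliWeight (hypergeomNextProb N k σ) b *
        log (hypergeomMarginal N k (Fin.cons b σ : Fin (i + 1) → Bool)
          / bernoulliProd p (Fin.cons b σ : Fin (i + 1) → Bool))
      = hypergeomMarginal N k σ * log (hypergeomMarginal N k σ / bernoulliProd p σ)
        - hypergeomMarginal N k σ * binEntropy (hypergeomNextProb N k σ)
        - hypergeomMarginal N k σ * hypergeomNextProb N k σ * log p
        - (hypergeomMarginal N k σ - hypergeomMarginal N k σ * hypergeomNextProb N k σ)
          * log (1 - p) := by
    intro σ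
    rcases eq_or_ne (hypergeomMarginal N k σ) 0 with h0 | h0
    · simp [h0]
    simp_rw [hypergeomMarginal_cons hkN.le hi, bernoulliProd_cons,
      mul_log_mul_div_mul h0 (bernoulliProd_pos hp σ).ne' (bernoulliWeight_pos hp _).ne',
      sum_add_distrib, ← sum_mul, sum_bernoulliWeight_mul_log_div hp]
    simp only [Fintype.sum_bool, bernoulliWeight, ↓reduceIte, Bool.false_eq_true]
    ring
  rw [sum_hypergeomMarginal_mul_succ hkN.le hi]
  simp_rw [hterm, sum_sub_distrib, ← sum_mul]
  rw [sum_sub_distrib, sum_hypergeomMarginal hkN.le hi.le,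
    sum_hypergeomMarginal_mul_nextProb hkN.le hi]
  simp only [binEntropy, log_inv, p]
  ring

lemma nextSpinEntropy_succ_le (hkN : k ≤ N) {i : ℕ} (hi : i + 1 < N) :
    nextSpinEntropy N k (i + 1) ≤ nextSpinEntropy N k i := by
  rw [nextSpinEntropy, sum_hypergeomMarginal_mul_succ hkN (by omega)]
  refine sum_le_sum fun σ _ ↦ ?_
  rcases eq_or_ne (hypergeomMarginal N k σ) 0 with h0 | h0
  · simp [h0]
  refine mul_le_mul_of_nonneg_left ?_ (hypergeomMarginal_nonneg σ)
  have hmix := sum_bernoulliWeight_mul_hypergeomNextProb_cons (k := k) hi σ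
  simp only [Fintype.sum_bool, bernoulliWeight, ↓reduceIte, Bool.false_eq_true] at hmix ⊢
  exact mul_binEntropy_add_mul_binEntropy_le (hypergeomNextProb_mem_Icc (by omega) h0)
    (fun ht ↦ ⟨hypergeomNextProb_cons_mem_Icc hi ht _, hypergeomNextProb_cons_mem_Icc hi ht _⟩)
    hmix

lemma marginalKL_eq_sum (hk : 0 < k) (hkN : k < N) {i : ℕ} (hi : i ≤ N) :
    marginalKL N k i = ∑ j ∈ range i, (binEntropy ((k : ℝ) / N) - nextSpinEntropy N k j) := by
  induction i with
  | zero => exact marginalKL_zero hkN.le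
  | succ i ih =>
    rw [sum_range_succ, ← ih (by omega), marginalKL_succ hk hkN (by omega)]
    ring

lemma mul_sum_range_le_of_monotoneOn {δ : ℕ → ℝ} {n N : ℕ} (hn : n ≤ N)
    (hδ : MonotoneOn δ (Set.Iio N)) :
    (N : ℝ) * ∑ i ∈ range n, δ i ≤ n * ∑ i ∈ range N, δ i := by
  rcases hn.eq_or_lt with rfl | hn
  · rw [mul_comm]
  have hlow : ∑ i ∈ range n, δ i ≤ n * δ n := by
    simpa using sum_le_sum fun i hi ↦
      hδ (Set.mem_Iio.mpr ((mem_range.mp hi).trans hn)) (Set.mem_Iio.mpr hn) (mem_range.mp hi).le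
  have hhigh : ((N : ℝ) - n) * δ n ≤ ∑ i ∈ Ico n N, δ i := by
    have := sum_le_sum fun i (hi : i ∈ Ico n N) ↦
      hδ (Set.mem_Iio.mpr hn) (Set.mem_Iio.mpr (mem_Ico.mp hi).2) (mem_Ico.mp hi).1
    rwa [sum_const, Nat.card_Ico, nsmul_eq_mul, Nat.cast_sub hn.le] at this
  have hnN : (n : ℝ) ≤ N := by exact_mod_cast hn.le
  rw [← sum_range_add_sum_Ico _ hn.le]
  nlinarith [mul_le_mul_of_nonneg_left hlow (sub_nonneg.mpr hnN),
    mul_le_mul_of_nonneg_left hhigh (Nat.cast_nonneg n)]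

/-- Revealing spins one at a time, the chain-rule increments `binEntropy (k / N) - nextSpinEntropy`
increase, so `marginalKL N k i / i` increases in `i`. -/
lemma mul_marginalKL_le (hk : 0 < k) (hkN : k < N) {n : ℕ} (hn : n ≤ N) :
    (N : ℝ) * marginalKL N k n ≤ n * marginalKL N k N := by
  rw [marginalKL_eq_sum hk hkN hn, marginalKL_eq_sum hk hkN le_rfl]
  refine mul_sum_range_le_of_monotoneOn hn fun i hi j hj hij ↦ sub_le_sub_left ?_ _
  refine antitoneOn_of_succ_le Set.ordConnected_Iio (fun a _ _ ha ↦ ?_) hi hj hij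
  rw [Order.succ_eq_add_one] at ha ⊢
  exact nextSpinEntropy_succ_le hkN.le ha

end MarginalKL

section BinomialPeak

/-- The largest probability of a binomial law with parameters `N` and `k / N`, attained at `k`. -/
noncomputable def binomialPeak (N k : ℕ) : ℝ :=
  N.choose k * ((k : ℝ) / N) ^ k * (1 - (k : ℝ) / N) ^ (N - k)

lemma binomialPeak_pos {N k : ℕ} (hk : 0 < k) (hkN : k < N) : 0 < binomialPeak N k := by
  have hp := natCast_div_mem_Ioo hk hkN
  have hC : (0 : ℝ) < N.choose k := by exact_mod_cast Nat.choose_pos hkN.le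
  exact mul_pos (mul_pos hC (pow_pos hp.1 k)) (pow_pos (sub_pos.mpr hp.2) _)

lemma sum_inv_choose_mul_log_eq_neg_log_binomialPeak {N k : ℕ} (hkN : k ≤ N) :
    ∑ σ : Fin N → Bool with numTrue σ = k,
      (N.choose k : ℝ)⁻¹ * log ((N.choose k : ℝ)⁻¹ / bernoulliProd ((k : ℝ) / N) σ)
      = -log (binomialPeak N k) := by
  have hC : (N.choose k : ℝ) ≠ 0 := by exact_mod_cast (Nat.choose_pos hkN).ne'
  have hB : ∀ σ ∈ ({σ | numTrue σ = k} : Finset (Fin N → Bool)),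
      bernoulliProd ((k : ℝ) / N) σ = ((k : ℝ) / N) ^ k * (1 - (k : ℝ) / N) ^ (N - k) := by
    intro σ hσ
    rw [bernoulliProd_eq_pow, Fintype.card_fin, (mem_filter.mp hσ).2]
  rw [sum_congr rfl fun σ hσ ↦ by rw [hB σ hσ], sum_const, card_filter_numTrue_eq,
    Fintype.card_fin, nsmul_eq_mul, mul_inv_cancel_left₀ hC, binomialPeak, ← log_inv]
  congr 1
  field_simp

lemma marginalKL_self {N k : ℕ} (hkN : k ≤ N) :
    marginalKL N k N = -log (binomialPeak N k) := by
  have hA : ∀ σ : Fin N → Bool,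
      hypergeomMarginal N k σ = if numTrue σ = k then (N.choose k : ℝ)⁻¹ else 0 := by
    intro σ
    unfold hypergeomMarginal
    rw [Nat.sub_self]
    split_ifs with hle heq heq
    · simp [heq]
    · simp [Nat.choose_eq_zero_of_lt (by omega : 0 < k - numTrue σ)]
    · omega
    · rfl
  rw [← sum_inv_choose_mul_log_eq_neg_log_binomialPeak hkN, marginalKL, sum_filter]
  simp_rw [hA]
  refine sum_congr rfl fun σ _ ↦ ?_
  split_ifs <;> simp

/-- The `j`-th term of the binomial expansion of `(k + (N - k)) ^ N`. -/
def binomialTerm (N k j : ℕ) : ℕ := N.choose j * k ^ j * (N - k) ^ (N - j)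

lemma binomialTerm_succ_le {N k j : ℕ} (hkj : k ≤ j) :
    binomialTerm N k (j + 1) ≤ binomialTerm N k j := by
  rcases lt_or_ge j N with hjN | hjN
  · refine Nat.le_of_mul_le_mul_right ?_ (Nat.succ_pos j)
    obtain ⟨d, hd⟩ : ∃ d, N - j = d + 1 := ⟨N - j - 1, by omega⟩
    have hd' : N - (j + 1) = d := by omega
    have key : (N - j) * k ≤ (N - k) * (j + 1) :=
      Nat.mul_le_mul (Nat.sub_le_sub_left hkj N) (by omega)
    calc binomialTerm N k (j + 1) * (j + 1)
        = N.choose (j + 1) * (j + 1) * k ^ j * (N - k) ^ d * k := by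
          rw [binomialTerm, hd', pow_succ]; ring
      _ = N.choose j * k ^ j * (N - k) ^ d * ((N - j) * k) := by
          rw [Nat.choose_succ_right_eq]; ring
      _ ≤ N.choose j * k ^ j * (N - k) ^ d * ((N - k) * (j + 1)) := Nat.mul_le_mul_left _ key
      _ = binomialTerm N k j * (j + 1) := by rw [binomialTerm, hd, pow_succ]; ring
  · simp [binomialTerm, Nat.choose_eq_zero_of_lt (by omega : N < j + 1)]

lemma binomialTerm_symm {N k j : ℕ} (hkN : k ≤ N) (hjN : j ≤ N) :
    binomialTerm N (N - k) (N - j) = binomialTerm N k j := by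
  rw [binomialTerm, binomialTerm, Nat.choose_symm hjN, Nat.sub_sub_self hkN, Nat.sub_sub_self hjN]
  ring

lemma binomialTerm_le {N k : ℕ} (hkN : k ≤ N) (j : ℕ) :
    binomialTerm N k j ≤ binomialTerm N k k := by
  have decreasing : ∀ {k}, ∀ j ≥ k, binomialTerm N k j ≤ binomialTerm N k k := fun j hj ↦
    Nat.rel_of_forall_rel_succ_of_le_of_le (· ≥ ·) (fun _ hn ↦ binomialTerm_succ_le hn) le_rfl hj
  rcases le_total k j with hkj | hjk
  · exact decreasing j hkj
  · rw [← binomialTerm_symm hkN (hjk.trans hkN), ← binomialTerm_symm (j := k) hkN hkN]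
    exact decreasing _ (Nat.sub_le_sub_left hjk N)

lemma sum_binomialTerm {N k : ℕ} (hkN : k ≤ N) :
    ∑ j ∈ range (N + 1), binomialTerm N k j = N ^ N := by
  have h := add_pow k (N - k) N
  rw [Nat.add_sub_cancel' hkN] at h
  rw [h]
  refine sum_congr rfl fun j _ ↦ ?_
  rw [binomialTerm, Nat.cast_id]
  ring

lemma inv_add_one_le_binomialPeak {N k : ℕ} (hN : 0 < N) (hkN : k ≤ N) :
    1 / ((N : ℝ) + 1) ≤ binomialPeak N k := by
  have hNR : (0 : ℝ) < N := by exact_mod_cast hN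
  have hpow : (N : ℝ) ^ N ≤ (N + 1) * binomialTerm N k k := by
    have : N ^ N ≤ (N + 1) * binomialTerm N k k :=
      calc N ^ N = ∑ j ∈ range (N + 1), binomialTerm N k j := (sum_binomialTerm hkN).symm
        _ ≤ ∑ _j ∈ range (N + 1), binomialTerm N k k := sum_le_sum fun j _ ↦ binomialTerm_le hkN j
        _ = (N + 1) * binomialTerm N k k := by simp
    exact_mod_cast this
  have hpeak : binomialPeak N k * (N : ℝ) ^ N = binomialTerm N k k := by
    rw [binomialPeak, binomialTerm, one_sub_div hNR.ne', div_pow, div_pow,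
      show (N : ℝ) ^ N = N ^ k * N ^ (N - k) by rw [← pow_add, Nat.add_sub_cancel' hkN]]
    push_cast [Nat.cast_sub hkN]
    field_simp
  rw [div_le_iff₀ (by positivity)]
  refine le_of_mul_le_mul_left ?_ (pow_pos hNR N)
  linear_combination hpow - (N + 1) * hpeak

lemma marginalKL_self_le_log {N k : ℕ} (hk : 0 < k) (hkN : k < N) :
    marginalKL N k N ≤ log (N + 1) := by
  have hN : (0 : ℝ) < N + 1 := by positivity
  rw [marginalKL_self hkN.le, neg_le, ← log_inv, inv_eq_one_div]
  exact log_le_log (by positivity) (inv_add_one_le_binomialPeak (hk.trans hkN) hkN.le)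

end BinomialPeak

section Stirling

open Stirling

lemma factorial_le_exp_one_mul_sqrt_mul {n : ℕ} (hn : n ≠ 0) :
    (n.factorial : ℝ) ≤ exp 1 * sqrt n * (n / exp 1) ^ n := by
  obtain ⟨m, rfl⟩ := Nat.exists_eq_succ_of_ne_zero hn
  have h : stirlingSeq (m + 1) ≤ stirlingSeq 1 := stirlingSeq'_antitone (Nat.zero_le m)
  rw [stirlingSeq_one, stirlingSeq, div_le_iff₀ (by positivity)] at h
  refine h.trans_eq ?_
  rw [sqrt_mul zero_le_two]
  field_simp

lemma binomialPeak_le {N k : ℕ} (hk : 0 < k) (hkN : k < N) :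
    binomialPeak N k ≤ exp 1 * sqrt N / (2 * π * sqrt (k * (N - k))) := by
  have hNk : (0 : ℝ) < N - k := sub_pos.mpr (by exact_mod_cast hkN)
  have hN : (0 : ℝ) < N := by exact_mod_cast hk.trans hkN
  have hkR : (0 : ℝ) < k := by exact_mod_cast hk
  have hcast : ((N - k : ℕ) : ℝ) = N - k := Nat.cast_sub hkN.le
  have hNf := factorial_le_exp_one_mul_sqrt_mul (hk.trans hkN).ne'
  have hkf := le_factorial_stirling k
  have hNkf := le_factorial_stirling (N - k)
  rw [hcast] at hNkf
  have hpow : ((N : ℝ) / exp 1) ^ N * (((k : ℝ) / N) ^ k * (1 - (k : ℝ) / N) ^ (N - k))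
      = ((k : ℝ) / exp 1) ^ k * ((N - k) / exp 1) ^ (N - k) := by
    rw [one_sub_div hN.ne', ← Nat.add_sub_cancel' hkN.le, pow_add, Nat.add_sub_cancel_left,
      mul_mul_mul_comm, ← mul_pow, ← mul_pow]
    congr 2 <;> field_simp
  have hsqrt : sqrt (2 * π * k) * sqrt (2 * π * (N - k)) = 2 * π * sqrt (k * (N - k)) := by
    rw [← sqrt_mul (by positivity), show 2 * π * k * (2 * π * (N - k)) = (2 * π) ^ 2 * (k * (N - k))
      by ring, sqrt_mul (by positivity), sqrt_sq (by positivity)]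
  calc binomialPeak N k
      = (N.factorial : ℝ) * (((k : ℝ) / N) ^ k * (1 - (k : ℝ) / N) ^ (N - k))
          / (k.factorial * (N - k).factorial) := by
        rw [binomialPeak, Nat.cast_choose ℝ hkN.le]
        ring
    _ ≤ exp 1 * sqrt N * ((N / exp 1) ^ N * (((k : ℝ) / N) ^ k * (1 - (k : ℝ) / N) ^ (N - k)))
          / ((sqrt (2 * π * k) * (k / exp 1) ^ k)
            * (sqrt (2 * π * (N - k)) * ((N - k) / exp 1) ^ (N - k))) := by
        have hq := sub_pos.mpr (natCast_div_mem_Ioo hk hkN).2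
        exact div_le_div₀ (by positivity)
          ((mul_le_mul_of_nonneg_right hNf (by positivity)).trans_eq (by ring))
          (by positivity) (mul_le_mul hkf hNkf (by positivity) (by positivity))
    _ = exp 1 * sqrt N / (2 * π * sqrt (k * (N - k))) := by
        rw [hpow, ← hsqrt]
        field_simp

end Stirling

section Ensembles

variable {N : ℕ} {m : ℝ}

lemma mag_eq_two_mul_numTrue_sub (φ : Fin N → Bool) : mag φ = 2 * numTrue φ - N := by
  have h : ∀ x, (if φ x then (1 : ℝ) else -1) = 2 * (if φ x then 1 else 0) - 1 := by
    intro x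
    split <;> norm_num
  rw [mag, sum_congr rfl fun x _ ↦ h x, sum_sub_distrib, ← mul_sum]
  simp [numTrue]

lemma numTrue_div_eq (hN : 0 < N) {φ₀ : Fin N → Bool} (hφ₀ : mag φ₀ / N = m) :
    (numTrue φ₀ : ℝ) / N = (1 + m) / 2 := by
  have hNR : (N : ℝ) ≠ 0 := by positivity
  rw [← hφ₀, mag_eq_two_mul_numTrue_sub]
  field_simp
  ring

lemma magSet_eq (hN : 0 < N) {φ₀ : Fin N → Bool} (hφ₀ : mag φ₀ / N = m) :
    magSet N m = ({φ | numTrue φ = numTrue φ₀} : Finset (Fin N → Bool)) := by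
  have hNR : (N : ℝ) ≠ 0 := by positivity
  ext φ
  simp only [magSet, mem_filter, mem_univ, true_and, ← hφ₀, mag_eq_two_mul_numTrue_sub,
    div_left_inj' hNR]
  exact ⟨fun h ↦ by exact_mod_cast (by linarith : (numTrue φ : ℝ) = numTrue φ₀), fun h ↦ by rw [h]⟩

lemma numTrue_mem_Ioo (hm : m ∈ Set.Ioo (-1 : ℝ) 1) (hN : 0 < N) {φ₀ : Fin N → Bool}
    (hφ₀ : mag φ₀ / N = m) : 0 < numTrue φ₀ ∧ numTrue φ₀ < N := by
  have hNR : (0 : ℝ) < N := by exact_mod_cast hN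
  have h := numTrue_div_eq hN hφ₀
  rw [div_eq_iff hNR.ne'] at h
  obtain ⟨hm1, hm2⟩ := hm
  constructor
  · exact_mod_cast (by nlinarith : (0 : ℝ) < numTrue φ₀)
  · exact_mod_cast (by nlinarith : (numTrue φ₀ : ℝ) < N)

lemma mcExp_comp_projB {n k : ℕ} (hS : magSet N m = ({φ | numTrue φ = k} : Finset (Fin N → Bool)))
    (I : Finset (Fin N)) (h : I.card = n) (f : (Fin n → Bool) → ℝ) :
    mcExp N m (fun φ ↦ f (projB I h φ)) = ∑ σ, hypergeomMarginal N k σ * f σ := by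
  rw [mcExp, hS, sum_numTrue_eq_comp_projB I h, card_filter_numTrue_eq, Fintype.card_fin, sum_div]
  refine sum_congr rfl fun σ _ ↦ ?_
  rw [hypergeomMarginal]
  split <;> ring

lemma exp_neg_mul_mag_div_Zcan (μ : ℝ) (φ : Fin N → Bool) :
    exp (-μ * mag φ) / Zcan N μ = bernoulliProd (exp (-μ) / (exp (-μ) + exp μ)) φ := by
  have hc : exp (-μ) + exp μ ≠ 0 := by positivity
  have hweight : ∀ ψ : Fin N → Bool, exp (-μ * mag ψ)
      = (exp (-μ) + exp μ) ^ N * bernoulliProd (exp (-μ) / (exp (-μ) + exp μ)) ψ := by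
    intro ψ
    have h := prod_ite_eq_mul_bernoulliProd hc ψ
    rw [Fintype.card_fin] at h
    rw [← h, mag, mul_sum, exp_sum]
    refine prod_congr rfl fun x _ ↦ ?_
    split <;> simp
  rw [Zcan, hweight, sum_congr rfl fun ψ _ ↦ hweight ψ, ← mul_sum, sum_bernoulliProd, mul_one,
    mul_div_cancel_left₀ _ (pow_ne_zero _ hc)]

lemma canExp_eq (μ : ℝ) (g : (Fin N → Bool) → ℝ) :
    canExp N μ g = ∑ φ, bernoulliProd (exp (-μ) / (exp (-μ) + exp μ)) φ * g φ := by
  rw [canExp, sum_div]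
  refine sum_congr rfl fun φ _ ↦ ?_
  rw [← exp_neg_mul_mag_div_Zcan, div_mul_eq_mul_div]

lemma exp_neg_artanh_div (hm : m ∈ Set.Ioo (-1 : ℝ) 1) :
    exp (-artanh (-m)) / (exp (-artanh (-m)) + exp (artanh (-m))) = (1 + m) / 2 := by
  obtain ⟨hm1, hm2⟩ := hm
  have h1m : 0 < 1 + m := by linarith
  have h2m : 0 < 1 - m := by linarith
  have hsq : exp (artanh (-m)) ^ 2 = (1 - m) / (1 + m) := by
    rw [← exp_nat_mul, artanh]
    push_cast
    rw [mul_div_cancel₀ _ two_ne_zero, exp_log (div_pos (by linarith) (by linarith))]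
    ring
  have he := exp_pos (artanh (-m))
  have key : ∀ u : ℝ, 0 < u → u⁻¹ / (u⁻¹ + u) = 1 / (1 + u ^ 2) := fun u hu ↦ by
    have : u⁻¹ + u ≠ 0 := by positivity
    field_simp
  rw [exp_neg, key _ he, hsq]
  field_simp
  ring

lemma relEnt_eq {k : ℕ} (hkN : k ≤ N)
    (hS : magSet N m = ({φ | numTrue φ = k} : Finset (Fin N → Bool))) {μ : ℝ}
    (hμ : exp (-μ) / (exp (-μ) + exp μ) = k / N) :
    relEnt N m μ = -log (binomialPeak N k) := by
  simp_rw [relEnt, exp_neg_mul_mag_div_Zcan, hμ, hS, card_filter_numTrue_eq, Fintype.card_fin]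
  exact sum_inv_choose_mul_log_eq_neg_log_binomialPeak hkN

end Ensembles

lemma abs_sum_mul_sub_sum_mul_le {X : Type*} [Fintype X] (a b f : X → ℝ) {F : ℝ}
    (hF : ∀ x, |f x| ≤ F) : |∑ x, a x * f x - ∑ x, b x * f x| ≤ F * ∑ x, |a x - b x| := by
  rw [← sum_sub_distrib, mul_sum]
  refine (abs_sum_le_sum_abs _ _).trans (sum_le_sum fun x _ ↦ ?_)
  rw [← sub_mul, abs_mul, mul_comm]
  exact mul_le_mul_of_nonneg_right (hF x) (abs_nonneg _)

lemma sq_sum_abs_hypergeomMarginal_sub_le {N k n : ℕ} (hk : 0 < k) (hkN : k < N) (hn : n ≤ N) :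
    (∑ σ : Fin n → Bool, |hypergeomMarginal N k σ - bernoulliProd ((k : ℝ) / N) σ|) ^ 2
      ≤ 2 * n * (log (N + 1) / N) := by
  have hN : (0 : ℝ) < N := by exact_mod_cast hk.trans hkN
  have hratio : marginalKL N k n ≤ n * (log (N + 1) / N) := by
    rw [mul_div_assoc', le_div_iff₀ hN, mul_comm]
    exact (mul_marginalKL_le hk hkN hn).trans
      (mul_le_mul_of_nonneg_left (marginalKL_self_le_log hk hkN) n.cast_nonneg)
  calc _ ≤ 2 * marginalKL N k n :=
        pinsker hypergeomMarginal_nonneg (bernoulliProd_pos (natCast_div_mem_Ioo hk hkN))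
          (sum_hypergeomMarginal hkN.le hn) (sum_bernoulliProd _)
    _ ≤ 2 * n * (log (N + 1) / N) := by linarith

theorem abs_mcExp_sub_canExp_le {m : ℝ} (hm : m ∈ Set.Ioo (-1 : ℝ) 1) {n N : ℕ} (hn : 0 < n)
    (hnN : n ≤ N) (I : Finset (Fin N)) (h : I.card = n) (f : (Fin n → Bool) → ℝ)
    {φ₀ : Fin N → Bool} (hφ₀ : mag φ₀ / N = m) :
    |mcExp N m (fun φ ↦ f (projB I h φ)) - canExp N (artanh (-m)) (fun φ ↦ f (projB I h φ))|
      ≤ sqrt (2 * n) * (univ.sup' univ_nonempty fun σ : Fin n → Bool ↦ |f σ|)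
        * sqrt (log (N + 1) / N) := by
  have hN : 0 < N := hn.trans_le hnN
  obtain ⟨hk, hkN⟩ := numTrue_mem_Ioo hm hN hφ₀
  have hp : exp (-artanh (-m)) / (exp (-artanh (-m)) + exp (artanh (-m))) = numTrue φ₀ / N := by
    rw [exp_neg_artanh_div hm, numTrue_div_eq hN hφ₀]
  set F := univ.sup' univ_nonempty fun σ : Fin n → Bool ↦ |f σ|
  have hF : ∀ σ, |f σ| ≤ F := fun σ ↦ le_sup' (fun σ ↦ |f σ|) (mem_univ σ)
  have hTV : ∑ σ : Fin n → Bool, |hypergeomMarginal N (numTrue φ₀) σ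
      - bernoulliProd ((numTrue φ₀ : ℝ) / N) σ| ≤ sqrt (2 * n * (log (N + 1) / N)) := by
    rw [← sqrt_sq (sum_nonneg fun σ _ ↦ abs_nonneg _)]
    exact sqrt_le_sqrt (sq_sum_abs_hypergeomMarginal_sub_le hk hkN hnN)
  rw [mcExp_comp_projB (magSet_eq hN hφ₀), canExp_eq, hp, sum_bernoulliProd_mul_projB]
  calc _ ≤ F * ∑ σ : Fin n → Bool, |hypergeomMarginal N (numTrue φ₀) σ
          - bernoulliProd ((numTrue φ₀ : ℝ) / N) σ| := abs_sum_mul_sub_sum_mul_le _ _ f hF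
    _ ≤ F * sqrt (2 * n * (log (N + 1) / N)) :=
        mul_le_mul_of_nonneg_left hTV ((abs_nonneg _).trans (hF fun _ ↦ true))
    _ = sqrt (2 * n) * F * sqrt (log (N + 1) / N) := by
        rw [sqrt_mul (by positivity)]
        ring

theorem log_div_two_sub_le_relEnt {m : ℝ} (hm : m ∈ Set.Ioo (-1 : ℝ) 1) {N : ℕ} (hN : 0 < N)
    {φ₀ : Fin N → Bool} (hφ₀ : mag φ₀ / N = m) :
    log N / 2 - log (exp 1 / (π * sqrt (1 - m ^ 2))) ≤ relEnt N m (artanh (-m)) := by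
  obtain ⟨hk, hkN⟩ := numTrue_mem_Ioo hm hN hφ₀
  have hNR : (0 : ℝ) < N := by exact_mod_cast hN
  have hm2 : 0 < 1 - m ^ 2 := by nlinarith [hm.1, hm.2]
  have hkR : (numTrue φ₀ : ℝ) = N * (1 + m) / 2 := by
    have h := numTrue_div_eq hN hφ₀
    rw [div_eq_iff hNR.ne'] at h
    linarith
  have hsqrt : sqrt (numTrue φ₀ * (N - numTrue φ₀)) = N * sqrt (1 - m ^ 2) / 2 := by
    rw [hkR, show N * (1 + m) / 2 * (N - N * (1 + m) / 2) = (N / 2) ^ 2 * (1 - m ^ 2) by ring,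
      sqrt_mul (by positivity), sqrt_sq (by positivity)]
    ring
  have hpeak : binomialPeak N (numTrue φ₀) ≤ exp 1 / (π * sqrt (1 - m ^ 2)) / sqrt N := by
    refine (binomialPeak_le hk hkN).trans_eq ?_
    rw [hsqrt]
    have : sqrt (N : ℝ) ^ 2 = N := sq_sqrt hNR.le
    field_simp
    linear_combination this
  rw [relEnt_eq hkN.le (magSet_eq hN hφ₀) (by rw [exp_neg_artanh_div hm, numTrue_div_eq hN hφ₀]),
    le_neg, neg_sub]
  calc log (binomialPeak N (numTrue φ₀))
      ≤ log (exp 1 / (π * sqrt (1 - m ^ 2)) / sqrt N) :=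
        log_le_log (binomialPeak_pos hk hkN) hpeak
    _ = log (exp 1 / (π * sqrt (1 - m ^ 2))) - log N / 2 := by
        rw [log_div (by positivity) (by positivity), log_sqrt hNR.le]

theorem exists_log_div_le_relEnt_div {m : ℝ} (hm : m ∈ Set.Ioo (-1 : ℝ) 1) :
    ∃ N₀ : ℕ, ∀ N : ℕ, N₀ ≤ N → (∃ φ : Fin N → Bool, mag φ / N = m) →
      log (N + 1) / (4 * N) ≤ relEnt N m (artanh (-m)) / N := by
  set c := log (exp 1 / (π * sqrt (1 - m ^ 2)))
  refine ⟨⌈exp (4 * c + 1)⌉₊ + 1, fun N hN ⟨φ₀, hφ₀⟩ ↦ ?_⟩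
  have hN0 : 0 < N := by omega
  have hNR : (0 : ℝ) < N := by exact_mod_cast hN0
  have hlogN : 4 * c + 1 ≤ log N := by
    rw [← log_exp (4 * c + 1)]
    refine log_le_log (exp_pos _) ((Nat.le_ceil _).trans ?_)
    exact_mod_cast (by omega : ⌈exp (4 * c + 1)⌉₊ ≤ N)
  have hlogN1 : log (N + 1) ≤ 1 + log N :=
    calc log (N + 1) ≤ log (2 * N) :=
          log_le_log (by positivity) (by linarith [(Nat.one_le_cast (α := ℝ)).mpr hN0])
      _ = log 2 + log N := log_mul two_ne_zero hNR.ne'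
      _ ≤ 1 + log N := by linarith [log_two_lt_d9]
  have hrel := log_div_two_sub_le_relEnt hm hN0 hφ₀
  rw [mul_comm, ← div_div, div_right_comm, div_le_div_iff_of_pos_right hNR]
  linarith

theorem stmt7 (m : ℝ) (hm : m ∈ Set.Ioo (-1 : ℝ) 1)
    (n : ℕ) (hn : 0 < n) (f : (Fin n → Bool) → ℝ) :
    -- (i) relative entropy bound on the difference of local expectations
    (∀ N : ℕ, n ≤ N → ∀ I : Finset (Fin N), ∀ h : I.card = n,
      (∃ φ : Fin N → Bool, mag φ / N = m) →
        |mcExp N m (fun φ => f (projB I h φ)) -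
            canExp N (artanh (-m)) (fun φ => f (projB I h φ))| ≤
          Real.sqrt (2 * n) *
            (Finset.univ.sup' Finset.univ_nonempty fun σ : Fin n → Bool => |f σ|) *
            Real.sqrt (Real.log (N + 1) / N)) ∧
    -- (ii) the logarithmic factor cannot be removed with this bound
    (∃ N₀ : ℕ, ∀ N : ℕ, N₀ ≤ N →
      (∃ φ : Fin N → Bool, mag φ / N = m) →
        Real.log (N + 1) / (4 * N) ≤ relEnt N m (artanh (-m)) / N) :=
  ⟨fun _ hnN I h ⟨_, hφ₀⟩ ↦ abs_mcExp_sub_canExp_le hm hn hnN I h f hφ₀,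
    exists_log_div_le_relEnt_div hm⟩
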